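/- Let u : ℝ³ → ℂ be a smooth function with compact support K, let k ∈ ℝ, and let n₁, n₂ : ℝ³ → ℝ be bounded measurable functions such that n₂(x) − n₁(x) ≥ δ for almost every x ∈ K, for some δ > 0. Then ∫_{ℝ³} (n₂ − n₁)^{−1} (Δu + k²n₁u) · conj(Δu + k²n₂u) dx = ∫_{ℝ³} (n₂ − n₁)^{−1} |Δu + k²n₂u|² dx + k² ∫_{ℝ³} ‖∇u‖² dx − k⁴ ∫_{ℝ³} n₂ |u|² dx. -/

import Mathlib

noncomputable section

open Real MeasureTheory

/-- Euclidean space `ℝ³`. -/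
abbrev E3 := EuclideanSpace ℝ (Fin 3)

/-- The Laplacian (sum of second partial derivatives). -/
def lap (f : E3 → ℂ) (x : E3) : ℂ :=
  ∑ i : Fin 3, fderiv ℝ (fun y => fderiv ℝ f y (EuclideanSpace.single i 1)) x
    (EuclideanSpace.single i 1)

/-- The squared norm of the gradient: `‖∇u‖² = Σᵢ |∂ᵢu|²`. -/
def gradSq (f : E3 → ℂ) (x : E3) : ℝ :=
  ∑ i : Fin 3, ‖fderiv ℝ f x (EuclideanSpace.single i 1)‖ ^ 2


lemma contDiff_pd {u : E3 → ℂ} (hu : ContDiff ℝ (⊤ : ℕ∞) u) (v : E3) :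
    ContDiff ℝ (⊤ : ℕ∞) (fun x => fderiv ℝ u x v) :=
  (hu.fderiv_right (by simp)).clm_apply contDiff_const

lemma hcs_pd {u : E3 → ℂ} (hsupp : HasCompactSupport u) (v : E3) :
    HasCompactSupport (fun x => fderiv ℝ u x v) :=
  (HasCompactSupport.fderiv ℝ hsupp).comp_left (g := fun L : E3 →L[ℝ] ℂ => L v) rfl

lemma ts_pd (u : E3 → ℂ) (v : E3) : tsupport (fun x => fderiv ℝ u x v) ⊆ tsupport u := by
  apply closure_minimal _ (isClosed_tsupport u)
  intro x hx
  have : fderiv ℝ u x ≠ 0 := by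
    intro h
    apply hx
    show fderiv ℝ u x v = 0
    rw [h]; rfl
  exact support_fderiv_subset ℝ this

lemma fderiv_conj_apply (f : E3 → ℂ) (x : E3) (w : E3) :
    fderiv ℝ (fun y => (starRingEnd ℂ) (f y)) x w = (starRingEnd ℂ) (fderiv ℝ f x w) := by
  have h := Complex.conjCLE.comp_fderiv (f := f) (x := x)
  have h2 : (fun y => (starRingEnd ℂ) (f y)) = ⇑Complex.conjCLE ∘ f := rfl
  rw [h2, h]
  simp

lemma lap_eq_zero_of_nmem {u : E3 → ℂ} {x : E3} (hx : x ∉ tsupport u) : lap u x = 0 := by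
  unfold lap
  apply Finset.sum_eq_zero
  intro i _
  have h1 : x ∉ tsupport (fun y => fderiv ℝ u y (EuclideanSpace.single i 1)) :=
    fun h => hx (ts_pd u _ h)
  have h2 : fderiv ℝ (fun y => fderiv ℝ u y (EuclideanSpace.single i (1:ℝ))) x = 0 := by
    by_contra h
    exact h1 (support_fderiv_subset ℝ (f := fun y => fderiv ℝ u y (EuclideanSpace.single i 1)) h)
  rw [h2]; rfl

lemma contDiff_pd2 {u : E3 → ℂ} (hu : ContDiff ℝ (⊤ : ℕ∞) u) (v w : E3) :
    ContDiff ℝ (⊤ : ℕ∞) (fun x => fderiv ℝ (fun y => fderiv ℝ u y v) x w) :=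
  contDiff_pd (contDiff_pd hu v) w

lemma hcs_pd2 {u : E3 → ℂ} (hsupp : HasCompactSupport u) (v w : E3) :
    HasCompactSupport (fun x => fderiv ℝ (fun y => fderiv ℝ u y v) x w) :=
  hcs_pd (hcs_pd hsupp v) w

lemma lap_continuous {u : E3 → ℂ} (hu : ContDiff ℝ (⊤ : ℕ∞) u) : Continuous (lap u) := by
  unfold lap
  exact continuous_finset_sum _ fun i _ => (contDiff_pd2 hu _ _).continuous

lemma lap_hcs {u : E3 → ℂ} (hsupp : HasCompactSupport u) : HasCompactSupport (lap u) := by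
  apply hsupp.mono'
  intro x hx
  by_contra h
  exact hx (lap_eq_zero_of_nmem h)

/-- Integration by parts: `∫ u conj(Δu) = -∫ ‖∇u‖²`. -/
lemma ibp_key {u : E3 → ℂ} (hu : ContDiff ℝ (⊤ : ℕ∞) u) (hsupp : HasCompactSupport u) :
    ∫ x : E3, u x * (starRingEnd ℂ) (lap u x)
      = -(((∫ x : E3, gradSq u x : ℝ) : ℂ)) := by
  set e : Fin 3 → E3 := fun i => EuclideanSpace.single i (1:ℝ) with he
  have key : ∀ i : Fin 3,
      (∫ x : E3, u x * (starRingEnd ℂ) (fderiv ℝ (fun y => fderiv ℝ u y (e i)) x (e i)))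
        = -(∫ x : E3, ((‖fderiv ℝ u x (e i)‖ ^ 2 : ℝ) : ℂ)) := by
    intro i
    set d : E3 → ℂ := fun y => fderiv ℝ u y (e i) with hd
    set g : E3 → ℂ := fun y => (starRingEnd ℂ) (d y) with hg
    have hdc : ContDiff ℝ (⊤ : ℕ∞) d := contDiff_pd hu (e i)
    have hdcs : HasCompactSupport d := hcs_pd hsupp (e i)
    have hgc : ContDiff ℝ (⊤ : ℕ∞) g :=
      (Complex.conjCLE : ℂ ≃L[ℝ] ℂ).toContinuousLinearMap.contDiff.comp hdc
    have hgcs : HasCompactSupport g := hdcs.comp_left (g := starRingEnd ℂ) (map_zero _)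
    have hfd : ∀ x, fderiv ℝ g x (e i) = (starRingEnd ℂ) (fderiv ℝ d x (e i)) :=
      fun x => fderiv_conj_apply d x (e i)
    have int1 : Integrable (fun x => fderiv ℝ u x (e i) * g x) :=
      Continuous.integrable_of_hasCompactSupport
        ((hdc.continuous).mul (hgc.continuous)) (hdcs.mul_right)
    have int2 : Integrable (fun x => u x * fderiv ℝ g x (e i)) := by
      apply Continuous.integrable_of_hasCompactSupport
        ((hu.continuous).mul ((contDiff_pd hgc (e i)).continuous))
        (hsupp.mul_right)
    have int3 : Integrable (fun x => u x * g x) :=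
      Continuous.integrable_of_hasCompactSupport
        ((hu.continuous).mul (hgc.continuous)) (hsupp.mul_right)
    have main := integral_mul_fderiv_eq_neg_fderiv_mul_of_integrable
      (f := u) (g := g) (v := e i) (μ := volume) int1 int2 int3
      (fun x _ => hu.differentiable (by simp) x) (fun x _ => hgc.differentiable (by simp) x)
    calc (∫ x : E3, u x * (starRingEnd ℂ) (fderiv ℝ (fun y => fderiv ℝ u y (e i)) x (e i)))
        = ∫ x : E3, u x * fderiv ℝ g x (e i) := by
          congr 1; funext x; rw [hfd x]
      _ = -∫ x : E3, fderiv ℝ u x (e i) * g x := main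
      _ = -∫ x : E3, ((‖fderiv ℝ u x (e i)‖ ^ 2 : ℝ) : ℂ) := by
          congr 1; apply integral_congr_ae; filter_upwards with x
          show d x * (starRingEnd ℂ) (d x) = _
          rw [Complex.mul_conj']
          push_cast
          rfl
  have intterm : ∀ i : Fin 3, Integrable
      (fun x : E3 => u x * (starRingEnd ℂ) (fderiv ℝ (fun y => fderiv ℝ u y (e i)) x (e i))) := by
    intro i
    apply Continuous.integrable_of_hasCompactSupport
    · exact (hu.continuous).mul (Complex.continuous_conj.comp (contDiff_pd2 hu _ _).continuous)
    · exact hsupp.mul_right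
  have intg : ∀ i : Fin 3, Integrable (fun x : E3 => ((‖fderiv ℝ u x (e i)‖ ^ 2 : ℝ) : ℂ)) := by
    intro i
    apply Continuous.integrable_of_hasCompactSupport
    · exact Complex.continuous_ofReal.comp (((contDiff_pd hu (e i)).continuous).norm.pow 2)
    · apply HasCompactSupport.comp_left (g := fun r : ℝ => (r : ℂ)) _ rfl
      apply HasCompactSupport.comp_left (g := fun r : ℝ => r ^ 2) _ (by norm_num)
      exact (hcs_pd hsupp (e i)).norm
  calc (∫ x : E3, u x * (starRingEnd ℂ) (lap u x))
      = ∫ x : E3, ∑ i : Fin 3,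
          u x * (starRingEnd ℂ) (fderiv ℝ (fun y => fderiv ℝ u y (e i)) x (e i)) := by
        congr 1; funext x; rw [lap, map_sum, Finset.mul_sum]
    _ = ∑ i : Fin 3, ∫ x : E3,
          u x * (starRingEnd ℂ) (fderiv ℝ (fun y => fderiv ℝ u y (e i)) x (e i)) :=
        integral_finset_sum _ (fun i _ => intterm i)
    _ = ∑ i : Fin 3, -(∫ x : E3, ((‖fderiv ℝ u x (e i)‖ ^ 2 : ℝ) : ℂ)) := by
        exact Finset.sum_congr rfl fun i _ => key i
    _ = -∑ i : Fin 3, ∫ x : E3, ((‖fderiv ℝ u x (e i)‖ ^ 2 : ℝ) : ℂ) := by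
        rw [Finset.sum_neg_distrib]
    _ = -∫ x : E3, ∑ i : Fin 3, ((‖fderiv ℝ u x (e i)‖ ^ 2 : ℝ) : ℂ) := by
        rw [integral_finset_sum _ (fun i _ => intg i)]
    _ = -(((∫ x : E3, gradSq u x : ℝ) : ℂ)) := by
        congr 1
        rw [show (((∫ x : E3, gradSq u x : ℝ)) : ℂ) = ∫ x : E3, ((gradSq u x : ℝ) : ℂ) from
          (integral_ofReal (𝕜 := ℂ)).symm]
        apply integral_congr_ae; filter_upwards with x
        rw [gradSq]; push_cast; rfl

/-- Let `u : ℝ³ → ℂ` be smooth with compact support `K`, `k ∈ ℝ`, and let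
`n₁, n₂ : ℝ³ → ℝ` be bounded measurable with `n₂ − n₁ ≥ δ` a.e. on `K` for some `δ > 0`.
Then
`∫ (n₂−n₁)⁻¹ (Δu + k²n₁u)·conj(Δu + k²n₂u) dx
  = ∫ (n₂−n₁)⁻¹ |Δu + k²n₂u|² dx + k² ∫ ‖∇u‖² dx − k⁴ ∫ n₂ |u|² dx`. -/
theorem interior_transmission_form_identity (u : E3 → ℂ) (hu : ContDiff ℝ (⊤ : ℕ∞) u)
    (hsupp : HasCompactSupport u) (k : ℝ) (δ : ℝ) (hδ : 0 < δ) (n₁ n₂ : E3 → ℝ)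
    (hm₁ : Measurable n₁) (hm₂ : Measurable n₂)
    (hb₁ : ∃ M : ℝ, ∀ x, |n₁ x| ≤ M) (hb₂ : ∃ M : ℝ, ∀ x, |n₂ x| ≤ M)
    (hgap : ∀ᵐ x : E3, x ∈ tsupport u → δ ≤ n₂ x - n₁ x) :
    (∫ x : E3, ((n₂ x - n₁ x : ℝ) : ℂ)⁻¹
        * (lap u x + (k : ℂ) ^ 2 * (n₁ x : ℂ) * u x)
        * (starRingEnd ℂ) (lap u x + (k : ℂ) ^ 2 * (n₂ x : ℂ) * u x))
      = ((∫ x : E3, (n₂ x - n₁ x)⁻¹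
            * ‖lap u x + (k : ℂ) ^ 2 * (n₂ x : ℂ) * u x‖ ^ 2 : ℝ) : ℂ)
        + (k : ℂ) ^ 2 * ((∫ x : E3, gradSq u x : ℝ) : ℂ)
        - (k : ℂ) ^ 4 * ((∫ x : E3, n₂ x * ‖u x‖ ^ 2 : ℝ) : ℂ) := by
  obtain ⟨M₂, hM₂⟩ := hb₂
  have hM₂0 : 0 ≤ M₂ := le_trans (abs_nonneg _) (hM₂ 0)
  set A : E3 → ℂ := fun x => lap u x + (k : ℂ) ^ 2 * (n₂ x : ℂ) * u x with hA
  -- basic continuity facts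
  have hlapc : Continuous (lap u) := lap_continuous hu
  have hAbound : ∀ x, ‖A x‖ ≤ ‖lap u x‖ + k ^ 2 * M₂ * ‖u x‖ := by
    intro x
    refine (norm_add_le _ _).trans ?_
    have h1 : ‖(k : ℂ) ^ 2 * (n₂ x : ℂ) * u x‖ = k ^ 2 * |n₂ x| * ‖u x‖ := by
      simp [norm_mul, norm_pow, Complex.norm_real, Real.norm_eq_abs, sq_abs]
    rw [h1]
    gcongr
    exact hM₂ x
  have hAm : AEStronglyMeasurable A volume := by
    apply Measurable.aestronglyMeasurable
    exact (hlapc.measurable).add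
      ((measurable_const.mul (Complex.measurable_ofReal.comp hm₂)).mul hu.continuous.measurable)
  -- integrable: u * conj (lap u)
  have int_a : Integrable (fun x : E3 => u x * (starRingEnd ℂ) (lap u x)) :=
    Continuous.integrable_of_hasCompactSupport
      (hu.continuous.mul (Complex.continuous_conj.comp hlapc)) hsupp.mul_right
  -- integrable: ‖u‖²
  have int_u2 : Integrable (fun x : E3 => ‖u x‖ ^ 2) :=
    Continuous.integrable_of_hasCompactSupport (hu.continuous.norm.pow 2)
      ((hsupp.norm).comp_left (g := fun r : ℝ => r ^ 2) (by norm_num))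
  have int_n2u : Integrable (fun x : E3 => n₂ x * ‖u x‖ ^ 2) :=
    int_u2.bdd_mul hm₂.aestronglyMeasurable (c := M₂) (Filter.Eventually.of_forall fun x => by simpa [Real.norm_eq_abs] using hM₂ x)
  have int_bC : Integrable (fun x : E3 => ((n₂ x * ‖u x‖ ^ 2 : ℝ) : ℂ)) := int_n2u.ofReal
  -- pointwise identity for u * conj A
  have hptB : ∀ x : E3, u x * (starRingEnd ℂ) (A x)
      = u x * (starRingEnd ℂ) (lap u x) + (k : ℂ) ^ 2 * ((n₂ x * ‖u x‖ ^ 2 : ℝ) : ℂ) := by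
    intro x
    have h1 : u x * (starRingEnd ℂ) (A x)
        = u x * (starRingEnd ℂ) (lap u x)
          + (k : ℂ) ^ 2 * (n₂ x : ℂ) * (u x * (starRingEnd ℂ) (u x)) := by
      simp only [hA, map_add, map_mul, map_pow, Complex.conj_ofReal]
      ring
    rw [h1, Complex.mul_conj']
    push_cast
    ring
  have int_uA : Integrable (fun x : E3 => u x * (starRingEnd ℂ) (A x)) :=
    (int_a.add (int_bC.const_mul ((k : ℂ) ^ 2))).congr
      (Filter.Eventually.of_forall fun x => (hptB x).symm)
  -- dominating function for the weighted term
  set gdom : E3 → ℝ := fun x => δ⁻¹ * (‖lap u x‖ + k ^ 2 * M₂ * ‖u x‖) ^ 2 with hgdom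
  have hdom_cont : Continuous gdom :=
    continuous_const.mul (((hlapc.norm).add (continuous_const.mul hu.continuous.norm)).pow 2)
  have hdom_cs : HasCompactSupport gdom := by
    apply hsupp.mono'
    intro x hx
    by_contra h
    apply hx
    simp [hgdom, lap_eq_zero_of_nmem h, image_eq_zero_of_notMem_tsupport h]
  have hdom_int : Integrable gdom := hdom_cont.integrable_of_hasCompactSupport hdom_cs
  have int_R1 : Integrable (fun x : E3 => (n₂ x - n₁ x)⁻¹ * ‖A x‖ ^ 2) := by
    apply hdom_int.mono'
    · exact (((hm₂.sub hm₁).inv.aemeasurable.aestronglyMeasurable)).mul ((hAm.norm).pow 2)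
    · filter_upwards [hgap] with x hx
      by_cases hxs : x ∈ tsupport u
      · have hge := hx hxs
        have hpos : (0 : ℝ) < n₂ x - n₁ x := lt_of_lt_of_le hδ hge
        have h1 : |(n₂ x - n₁ x)⁻¹| ≤ δ⁻¹ := by
          rw [abs_inv, abs_of_pos hpos]
          exact inv_anti₀ hδ hge
        have h2 : ‖A x‖ ^ 2 ≤ (‖lap u x‖ + k ^ 2 * M₂ * ‖u x‖) ^ 2 :=
          pow_le_pow_left₀ (norm_nonneg _) (hAbound x) 2
        rw [Real.norm_eq_abs, abs_mul, abs_of_nonneg (by positivity : (0:ℝ) ≤ ‖A x‖ ^ 2)]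
        calc |(n₂ x - n₁ x)⁻¹| * ‖A x‖ ^ 2
            ≤ δ⁻¹ * (‖lap u x‖ + k ^ 2 * M₂ * ‖u x‖) ^ 2 := by
              apply mul_le_mul h1 h2 (by positivity) (by positivity)
          _ = gdom x := rfl
      · have h0 : u x = 0 := image_eq_zero_of_notMem_tsupport hxs
        have hl : lap u x = 0 := lap_eq_zero_of_nmem hxs
        have : A x = 0 := by simp [hA, h0, hl]
        rw [Real.norm_eq_abs, this]
        simp [hgdom]
        positivity
  have int_R1C : Integrable (fun x : E3 => (((n₂ x - n₁ x)⁻¹ * ‖A x‖ ^ 2 : ℝ) : ℂ)) :=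
    int_R1.ofReal
  -- main pointwise a.e. identity
  have hmain : ∀ᵐ x : E3,
      ((n₂ x - n₁ x : ℝ) : ℂ)⁻¹ * (lap u x + (k : ℂ) ^ 2 * (n₁ x : ℂ) * u x)
          * (starRingEnd ℂ) (A x)
        = (((n₂ x - n₁ x)⁻¹ * ‖A x‖ ^ 2 : ℝ) : ℂ)
          - (k : ℂ) ^ 2 * (u x * (starRingEnd ℂ) (A x)) := by
    filter_upwards [hgap] with x hx
    by_cases hxs : x ∈ tsupport u
    · have hge := hx hxs
      have hne : (n₂ x - n₁ x : ℝ) ≠ 0 := ne_of_gt (lt_of_lt_of_le hδ hge)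
      have hneC : ((n₂ x - n₁ x : ℝ) : ℂ) ≠ 0 := by exact_mod_cast hne
      have e1 : lap u x + (k : ℂ) ^ 2 * (n₁ x : ℂ) * u x
          = A x - (k : ℂ) ^ 2 * ((n₂ x - n₁ x : ℝ) : ℂ) * u x := by
        simp only [hA]; push_cast; ring
      rw [e1]
      have e2 : ((n₂ x - n₁ x : ℝ) : ℂ)⁻¹
            * (A x - (k : ℂ) ^ 2 * ((n₂ x - n₁ x : ℝ) : ℂ) * u x) * (starRingEnd ℂ) (A x)
          = ((n₂ x - n₁ x : ℝ) : ℂ)⁻¹ * (A x * (starRingEnd ℂ) (A x))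
            - (((n₂ x - n₁ x : ℝ) : ℂ)⁻¹ * ((n₂ x - n₁ x : ℝ) : ℂ))
              * ((k : ℂ) ^ 2 * (u x * (starRingEnd ℂ) (A x))) := by ring
      rw [e2, Complex.mul_conj', inv_mul_cancel₀ hneC, one_mul]
      push_cast
      ring
    · have h0 : u x = 0 := image_eq_zero_of_notMem_tsupport hxs
      have hl : lap u x = 0 := lap_eq_zero_of_nmem hxs
      simp [hA, h0, hl]
  -- computation of ∫ u conj A
  have hIA : (∫ x : E3, u x * (starRingEnd ℂ) (A x))
      = -(((∫ x : E3, gradSq u x : ℝ)) : ℂ)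
        + (k : ℂ) ^ 2 * (((∫ x : E3, n₂ x * ‖u x‖ ^ 2 : ℝ)) : ℂ) := by
    calc (∫ x : E3, u x * (starRingEnd ℂ) (A x))
        = ∫ x : E3, (u x * (starRingEnd ℂ) (lap u x)
            + (k : ℂ) ^ 2 * ((n₂ x * ‖u x‖ ^ 2 : ℝ) : ℂ)) :=
          integral_congr_ae (Filter.Eventually.of_forall fun x => hptB x)
      _ = (∫ x : E3, u x * (starRingEnd ℂ) (lap u x))
            + ∫ x : E3, (k : ℂ) ^ 2 * ((n₂ x * ‖u x‖ ^ 2 : ℝ) : ℂ) :=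
          integral_add int_a (int_bC.const_mul _)
      _ = -(((∫ x : E3, gradSq u x : ℝ)) : ℂ)
            + (k : ℂ) ^ 2 * (((∫ x : E3, n₂ x * ‖u x‖ ^ 2 : ℝ)) : ℂ) := by
          rw [ibp_key hu hsupp, integral_const_mul]
          congr 2
          rw [show (((∫ x : E3, n₂ x * ‖u x‖ ^ 2 : ℝ)) : ℂ)
              = ∫ x : E3, ((n₂ x * ‖u x‖ ^ 2 : ℝ) : ℂ) from (integral_ofReal (𝕜 := ℂ)).symm]
  -- final chain
  calc (∫ x : E3, ((n₂ x - n₁ x : ℝ) : ℂ)⁻¹ * (lap u x + (k : ℂ) ^ 2 * (n₁ x : ℂ) * u x)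
          * (starRingEnd ℂ) (A x))
      = ∫ x : E3, ((((n₂ x - n₁ x)⁻¹ * ‖A x‖ ^ 2 : ℝ) : ℂ)
          - (k : ℂ) ^ 2 * (u x * (starRingEnd ℂ) (A x))) := integral_congr_ae hmain
    _ = (∫ x : E3, (((n₂ x - n₁ x)⁻¹ * ‖A x‖ ^ 2 : ℝ) : ℂ))
          - ∫ x : E3, (k : ℂ) ^ 2 * (u x * (starRingEnd ℂ) (A x)) :=
        integral_sub int_R1C (int_uA.const_mul _)
    _ = (((∫ x : E3, (n₂ x - n₁ x)⁻¹ * ‖A x‖ ^ 2 : ℝ)) : ℂ)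
          - (k : ℂ) ^ 2 * ∫ x : E3, u x * (starRingEnd ℂ) (A x) := by
        rw [integral_const_mul,
          show (((∫ x : E3, (n₂ x - n₁ x)⁻¹ * ‖A x‖ ^ 2 : ℝ)) : ℂ)
              = ∫ x : E3, (((n₂ x - n₁ x)⁻¹ * ‖A x‖ ^ 2 : ℝ) : ℂ) from
            (integral_ofReal (𝕜 := ℂ)).symm]
    _ = (((∫ x : E3, (n₂ x - n₁ x)⁻¹ * ‖A x‖ ^ 2 : ℝ)) : ℂ)
          + (k : ℂ) ^ 2 * (((∫ x : E3, gradSq u x : ℝ)) : ℂ)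
          - (k : ℂ) ^ 4 * (((∫ x : E3, n₂ x * ‖u x‖ ^ 2 : ℝ)) : ℂ) := by
        rw [hIA]; ring
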